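/- arXiv:1508.06072 — 2 statements merged into one kernel-verified Lean document; each statement's English description precedes it below -/
import Mathlib

section
/- Let R′ > R > 1 and let f be holomorphic on Ω_{R′} with Faber coefficients (a_n). Then for every r with 1 < r < R and every n ≥ 1, the counterclockwise circle integrals satisfy ∫_{|w|=R} conj(f(Φ⁻¹(w)))·w^{n−1} dw − ∫_{|w|=r} conj(f(Φ⁻¹(w)))·w^{n−1} dw = 2πi·conj(a_n)·(R^{2n} − r^{2n}). -/
open Complex Filter Set Metric

noncomputable section

/-- Sup-norm of `g` over the set `L`. -/
def supNorm (g : ℂ → ℂ) (L : Set ℂ) : ℝ :=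
  sSup ((fun z => ‖g z‖) '' L)

/-- A continuum: a compact connected set with at least two points whose complement
in the Riemann sphere (one-point compactification of `ℂ`) is simply connected. -/
def IsContinuum (K : Set ℂ) : Prop :=
  IsCompact K ∧ IsConnected K ∧ K.Nontrivial ∧
  SimplyConnectedSpace ↥((OnePoint.some '' K)ᶜ : Set (OnePoint ℂ))

/-- Exterior Riemann map for `K`, normalized at infinity with derivative `γ > 0`. -/
def IsExtRiemannMap (K : Set ℂ) (Φ : ℂ → ℂ) (γ : ℝ) : Prop :=
  0 < γ ∧ DifferentiableOn ℂ Φ Kᶜ ∧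
  Set.BijOn Φ Kᶜ {w : ℂ | 1 < ‖w‖} ∧
  Tendsto (fun z => Φ z / z) (Bornology.cobounded ℂ) (nhds (γ : ℂ))

/-- The Faber polynomials of `K` (relative to the exterior map `Φ`). -/
def IsFaberFamily (Φ : ℂ → ℂ) (F : ℕ → Polynomial ℂ) : Prop :=
  ∀ n : ℕ, (F n).degree = (n : ℕ) ∧
    Tendsto (fun z => Φ z ^ n - (F n).eval z) (Bornology.cobounded ℂ) (nhds 0)

/-- The Green level set `Ω_R`. -/
def greenLevel (K : Set ℂ) (Φ : ℂ → ℂ) (R : ℝ) : Set ℂ :=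
  K ∪ {z | z ∉ K ∧ ‖Φ z‖ < R}

/-- `f` has Faber coefficients `a`: the series `∑ aₙ Fₙ` converges to `f`
uniformly on compact subsets of `Ω`. -/
def HasFaberExpansion (F : ℕ → Polynomial ℂ) (Ω : Set ℂ) (f : ℂ → ℂ) (a : ℕ → ℂ) : Prop :=
  ∀ L : Set ℂ, L ⊆ Ω → IsCompact L →
    TendstoUniformlyOn (fun N z => ∑ n ∈ Finset.range N, a n * (F n).eval z) f atTop L

/-- The set of radii `R > 1` exhibiting the Bohr phenomenon for the Faber-Green condenser. -/
def bohrSet (K : Set ℂ) (Φ : ℂ → ℂ) (F : ℕ → Polynomial ℂ) : Set ℝ :=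
  {R : ℝ | 1 < R ∧ ∀ f : ℂ → ℂ, ∀ a : ℕ → ℂ,
    DifferentiableOn ℂ f (greenLevel K Φ R) →
    (∀ z ∈ greenLevel K Φ R, ‖f z‖ < 1) →
    HasFaberExpansion F (greenLevel K Φ R) f a →
    Summable (fun n => ‖a n‖ * supNorm (fun z => (F n).eval z) K) ∧
      ∑' n, ‖a n‖ * supNorm (fun z => (F n).eval z) K < 1}

/-- The Bohr radius of the Faber-Green condenser. -/
def bohrRadius (K : Set ℂ) (Φ : ℂ → ℂ) (F : ℕ → Polynomial ℂ) : ℝ :=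
  sInf (bohrSet K Φ F)

/-! On the circle `|w| = ρ` one has `conj w = ρ² / w`, so
`∮ conj (g w) wⁿ⁻¹ dw = -ρ²ⁿ · conj (∮ g u u⁻ⁿ⁻¹ du)`. For `g = f ∘ Φ⁻¹` and `1 < ρ < R′` the
latter integral is `2πi aₙ`: the Faber series converges uniformly on `Φ⁻¹` of the circle, and
`Fₘ (Φ⁻¹ u) = uᵐ + o(1)` at `∞` is holomorphic on `|u| > 1` off the (countable) image of the
critical points of `Φ`, so letting the circle grow to `∞` gives
`∮ Fₘ (Φ⁻¹ u) u⁻ⁿ⁻¹ du = 2πi δₘₙ`. -/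

open MeasureTheory Topology Asymptotics Bornology Real ComplexConjugate

theorem circleIntegral_conj_mul_pow (g : ℂ → ℂ) (ρ : ℝ) (n : ℕ) :
    (∮ w in C(0, ρ), conj (g w) * w ^ n) =
      -(ρ : ℂ) ^ (2 * (n + 1)) * conj (∮ u in C(0, ρ), g u * (u ^ (n + 2))⁻¹) := by
  rcases eq_or_ne ρ 0 with rfl | hρ
  · simp [circleIntegral.integral_radius_zero]
  simp only [circleIntegral, deriv_circleMap, smul_eq_mul, ← intervalIntegral.intervalIntegral_conj,
    ← intervalIntegral.integral_const_mul]
  refine intervalIntegral.integral_congr fun θ _ => ?_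
  set z := circleMap 0 ρ θ
  have hz : z ≠ 0 := circleMap_ne_center hρ
  have hconj : conj z * z = (ρ : ℂ) ^ 2 := by
    rw [mul_comm, mul_conj, normSq_eq_norm_sq, norm_circleMap_zero]
    norm_cast
    exact sq_abs ρ
  have hρpow : (ρ : ℂ) ^ (2 * (n + 1)) = conj z ^ (n + 1) * z ^ (n + 1) := by
    rw [pow_mul, ← hconj, mul_pow]
  simp only [map_mul, map_inv₀, map_pow, conj_I, hρpow]
  have : conj z ≠ 0 := by simpa using hz
  field_simp
  ring

theorem circleIntegral_pow_mul_inv_pow {ρ : ℝ} (hρ : 0 < ρ) (m n : ℕ) :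
    (∮ u in C(0, ρ), u ^ m * (u ^ (n + 1))⁻¹) = if m = n then 2 * π * I else 0 := by
  have hzpow : EqOn (fun u : ℂ => u ^ m * (u ^ (n + 1))⁻¹)
      (fun u => (u - 0) ^ ((m : ℤ) - (n + 1))) (sphere 0 ρ) := fun u hu => by
    have hu0 : u ≠ 0 := ne_zero_of_mem_sphere hρ.ne' ⟨u, hu⟩
    dsimp only
    rw [sub_zero, zpow_sub₀ hu0, div_eq_mul_inv]
    norm_cast
  rw [circleIntegral.integral_congr hρ.le hzpow]
  split_ifs with hmn
  · subst hmn
    simpa [zpow_neg_one] using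
      circleIntegral.integral_sub_inv_of_mem_ball (c := 0) (w := 0) (mem_ball_self hρ)
  · exact circleIntegral.integral_sub_zpow_of_ne (by omega) _ _ _

theorem circleIntegral_eq_zero_of_isLittleO_inv {g : ℂ → ℂ} {ρ : ℝ} {S : Set ℂ} (hρ : 0 < ρ)
    (hS : S.Countable) (hc : ContinuousOn g {u | ρ ≤ ‖u‖})
    (hd : ∀ u, ρ < ‖u‖ → u ∉ S → DifferentiableAt ℂ g u)
    (hg : g =o[cobounded ℂ] (·⁻¹)) :
    (∮ u in C(0, ρ), g u) = 0 := by
  have hradius : ∀ R, ρ ≤ R → (∮ u in C(0, R), g u) = ∮ u in C(0, ρ), g u := fun R hR =>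
    circleIntegral_eq_of_differentiable_on_annulus_off_countable hρ hR hS
      (hc.mono fun u hu => by simpa using hu.2)
      (fun u hu => hd u (by simpa using hu.1.2) hu.2)
  refine norm_le_zero_iff.1 (le_of_forall_pos_le_add fun ε hε => ?_)
  obtain ⟨R₀, -, hR₀⟩ := hasBasis_cobounded_norm.eventually_iff.1
    (hg.def (c := ε / (2 * π)) (by positivity))
  set R := max R₀ ρ
  have hR : 0 < R := hρ.trans_le (le_max_right _ _)
  have hbound : ∀ u ∈ sphere (0 : ℂ) R, ‖g u‖ ≤ ε / (2 * π) * R⁻¹ := fun u hu => by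
    have hu : ‖u‖ = R := by simpa using hu
    simpa [hu] using hR₀ (show R₀ ≤ ‖u‖ from hu ▸ le_max_left _ _)
  calc ‖∮ u in C(0, ρ), g u‖ = ‖∮ u in C(0, R), g u‖ := by rw [hradius R (le_max_right _ _)]
    _ ≤ 2 * π * R * (ε / (2 * π) * R⁻¹) :=
      circleIntegral.norm_integral_le_of_norm_le_const hR.le hbound
    _ = 0 + ε := by field_simp; ring

theorem TendstoUniformlyOn.mul_right_of_norm_le {ι α : Type*} {l : Filter ι}
    {F : ι → α → ℂ} {f h : α → ℂ} {s : Set α} {C : ℝ}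
    (hF : TendstoUniformlyOn F f l s) (hh : ∀ x ∈ s, ‖h x‖ ≤ C) :
    TendstoUniformlyOn (fun i x => F i x * h x) (fun x => f x * h x) l s := by
  rw [Metric.tendstoUniformlyOn_iff] at hF ⊢
  intro ε hε
  filter_upwards [hF (ε / (|C| + 1)) (by positivity)] with i hi x hx
  calc dist (f x * h x) (F i x * h x) = dist (f x) (F i x) * ‖h x‖ := by
        rw [dist_eq_norm, dist_eq_norm, ← sub_mul, norm_mul]
    _ ≤ ε / (|C| + 1) * |C| :=
        mul_le_mul (hi x hx).le ((hh x hx).trans (le_abs_self C)) (norm_nonneg _) (by positivity)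
    _ < ε := by
        rw [div_mul_eq_mul_div, div_lt_iff₀ (by positivity)]
        nlinarith [abs_nonneg C]

theorem circleIntegral_mul_inv_pow_of_tendsto_pow_sub {p : ℂ → ℂ} {ρ : ℝ} {S : Set ℂ}
    (hρ : 0 < ρ) (hS : S.Countable) (hc : ContinuousOn p {u | ρ ≤ ‖u‖})
    (hd : ∀ u, ρ < ‖u‖ → u ∉ S → DifferentiableAt ℂ p u) (m : ℕ)
    (hp : Tendsto (fun u => u ^ m - p u) (cobounded ℂ) (𝓝 0)) (n : ℕ) :
    (∮ u in C(0, ρ), p u * (u ^ (n + 1))⁻¹) = if m = n then 2 * π * I else 0 := by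
  have hne : ∀ u : ℂ, ρ ≤ ‖u‖ → u ≠ 0 := fun u hu h0 => by
    simp only [h0, norm_zero] at hu; linarith
  have hinv : (fun u : ℂ => (u ^ (n + 1))⁻¹) =O[cobounded ℂ] (·⁻¹) := by
    refine IsBigO.of_bound 1 ?_
    filter_upwards [eventually_cobounded_le_norm 1] with u hu
    rw [one_mul, norm_inv, norm_inv, norm_pow]
    exact inv_anti₀ (by linarith) (le_self_pow₀ hu (by omega))
  have herror : (∮ u in C(0, ρ), (u ^ m - p u) * (u ^ (n + 1))⁻¹) = 0 := by
    refine circleIntegral_eq_zero_of_isLittleO_inv hρ hS ?_ ?_ ?_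
    · exact ((continuousOn_pow m).sub hc).mul
        ((continuousOn_pow _).inv₀ fun u hu => pow_ne_zero _ (hne u hu))
    · intro u hu huS
      exact ((differentiableAt_pow m).sub (hd u hu huS)).mul
        ((differentiableAt_pow _).inv (pow_ne_zero _ (hne u hu.le)))
    · simpa using (isLittleO_one_iff ℂ).2 hp |>.mul_isBigO hinv
  have hcont : ContinuousOn (fun u : ℂ => (u ^ (n + 1))⁻¹) (sphere 0 ρ) :=
    (continuousOn_pow _).inv₀ fun u hu => pow_ne_zero _ (hne u (by simp_all))
  have hpc : ContinuousOn p (sphere 0 ρ) := hc.mono fun u hu => by simp_all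
  calc (∮ u in C(0, ρ), p u * (u ^ (n + 1))⁻¹)
      = (∮ u in C(0, ρ), u ^ m * (u ^ (n + 1))⁻¹) -
          ∮ u in C(0, ρ), (u ^ m - p u) * (u ^ (n + 1))⁻¹ := by
        have hmain : CircleIntegrable (fun u => u ^ m * (u ^ (n + 1))⁻¹) 0 ρ :=
          ((continuousOn_pow m).mul hcont).circleIntegrable hρ.le
        have hrest : CircleIntegrable (fun u => (u ^ m - p u) * (u ^ (n + 1))⁻¹) 0 ρ :=
          (((continuousOn_pow m).sub hpc).mul hcont).circleIntegrable hρ.le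
        rw [← circleIntegral.integral_sub hmain hrest]
        exact circleIntegral.integral_congr hρ.le fun u _ => by ring
    _ = if m = n then 2 * π * I else 0 := by
        rw [herror, sub_zero, circleIntegral_pow_mul_inv_pow hρ]

theorem circleIntegral_mul_inv_pow_of_tendstoUniformlyOn {p : ℕ → ℂ → ℂ} {a : ℕ → ℂ}
    {g : ℂ → ℂ} {ρ : ℝ} {n : ℕ} (hρ : 0 < ρ) (hp : ∀ m, ContinuousOn (p m) (sphere 0 ρ))
    (hmom : ∀ m, (∮ u in C(0, ρ), p m u * (u ^ (n + 1))⁻¹) = if m = n then 2 * π * I else 0)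
    (hlim : TendstoUniformlyOn (fun N u => ∑ m ∈ Finset.range N, a m * p m u) g atTop
      (sphere 0 ρ)) :
    (∮ u in C(0, ρ), g u * (u ^ (n + 1))⁻¹) = 2 * π * I * a n := by
  have hw : ContinuousOn (fun u : ℂ => (u ^ (n + 1))⁻¹) (sphere 0 ρ) :=
    (continuousOn_pow _).inv₀ fun u hu => pow_ne_zero _ (ne_zero_of_mem_sphere hρ.ne' ⟨u, hu⟩)
  have hwbound : ∀ u ∈ sphere (0 : ℂ) ρ, ‖(u ^ (n + 1))⁻¹‖ ≤ (ρ ^ (n + 1))⁻¹ := fun u hu => by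
    simp_all
  have hpartial : ∀ N, n < N → (∮ u in C(0, ρ), (∑ m ∈ Finset.range N, a m * p m u) *
      (u ^ (n + 1))⁻¹) = 2 * π * I * a n := fun N hN => by
    have hint : ∀ m ∈ Finset.range N,
        CircleIntegrable (fun u => a m * (p m u * (u ^ (n + 1))⁻¹)) 0 ρ := fun m _ =>
      (continuousOn_const.mul ((hp m).mul hw)).circleIntegrable hρ.le
    calc (∮ u in C(0, ρ), (∑ m ∈ Finset.range N, a m * p m u) * (u ^ (n + 1))⁻¹)
        = ∑ m ∈ Finset.range N, ∮ u in C(0, ρ), a m * (p m u * (u ^ (n + 1))⁻¹) := by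
          rw [← circleIntegral.integral_fun_sum hint]
          simp only [Finset.sum_mul, mul_assoc]
      _ = ∑ m ∈ Finset.range N, if m = n then a m * (2 * π * I) else 0 := by
          simp only [circleIntegral.integral_const_mul, hmom, mul_ite, mul_zero]
      _ = 2 * π * I * a n := by
          rw [Finset.sum_ite_eq', if_pos (Finset.mem_range.2 hN), mul_comm]
  refine tendsto_nhds_unique ?_ (tendsto_atTop_of_eventually_const (i₀ := n + 1) hpartial)
  exact (hlim.mul_right_of_norm_le hwbound).tendsto_circleIntegral_of_continuousOn hρ.le
    (Eventually.of_forall fun N => (continuousOn_finsetSum _ fun m _ =>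
      continuousOn_const.mul (hp m)).mul hw)

section InverseOfInjective

variable {U V : Set ℂ} {Φ Ψ : ℂ → ℂ}

theorem Set.InjOn.not_eventually_eq (hinj : InjOn Φ U) {z : ℂ} (hz : U ∈ 𝓝 z) :
    ¬∀ᶠ x in 𝓝 z, Φ x = Φ z := fun h => by
  obtain ⟨x, ⟨hΦx, hxU⟩, hxz⟩ :=
    (((h.and hz).filter_mono nhdsWithin_le_nhds).and (self_mem_nhdsWithin (s := {z}ᶜ))).exists
  exact hxz (hinj hxU (mem_of_mem_nhds hz) hΦx)

theorem nhds_le_map_nhds_of_injOn (hU : IsOpen U) (hΦ : DifferentiableOn ℂ Φ U)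
    (hinj : InjOn Φ U) {z : ℂ} (hz : z ∈ U) : 𝓝 (Φ z) ≤ map Φ (𝓝 z) :=
  (hΦ.analyticAt (hU.mem_nhds hz)).eventually_constant_or_nhds_le_map_nhds.resolve_left
    (hinj.not_eventually_eq (hU.mem_nhds hz))

theorem continuousAt_of_leftInvOn (hU : IsOpen U) (hΦ : DifferentiableOn ℂ Φ U)
    (hinv : LeftInvOn Ψ Φ U) {z : ℂ} (hz : z ∈ U) : ContinuousAt Ψ (Φ z) := by
  have hΨΦ : Tendsto (Ψ ∘ Φ) (𝓝 z) (𝓝 z) :=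
    tendsto_id.congr' (eventually_of_mem (hU.mem_nhds hz) fun x hx => (hinv hx).symm)
  rw [ContinuousAt, hinv hz]
  exact (tendsto_map'_iff.2 hΨΦ).mono_left (nhds_le_map_nhds_of_injOn hU hΦ hinv.injOn hz)

theorem continuousOn_of_invOn (hU : IsOpen U) (hΦ : DifferentiableOn ℂ Φ U)
    (hinv : InvOn Ψ Φ U V) (hmaps : MapsTo Ψ V U) : ContinuousOn Ψ V := fun w hw => by
  simpa only [hinv.2 hw] using
    (continuousAt_of_leftInvOn hU hΦ hinv.1 (hmaps hw)).continuousWithinAt (s := V)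

theorem countable_setOf_deriv_eq_zero_of_injOn (hU : IsOpen U) (hΦ : DifferentiableOn ℂ Φ U)
    (hinj : InjOn Φ U) : {z ∈ U | deriv Φ z = 0}.Countable := by
  refine (HereditarilyLindelofSpace.isLindelof _).countable_of_isDiscrete
    (isDiscrete_iff_nhdsNE.2 fun z hz => ?_)
  rcases ((hΦ.analyticOnNhd hU).deriv z hz.1).eventually_eq_zero_or_eventually_ne_zero with
    hzero | hne
  -- a non-isolated zero of the analytic function `deriv Φ` would make `Φ` locally constant
  · obtain ⟨ε, hε, hball⟩ := Metric.mem_nhds_iff.1 (hzero.and (hU.mem_nhds hz.1))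
    refine absurd ?_ (hinj.not_eventually_eq (hU.mem_nhds hz.1))
    filter_upwards [Metric.ball_mem_nhds z hε] with x hx
    exact isOpen_ball.is_const_of_deriv_eq_zero (convex_ball z ε).isPreconnected
      (hΦ.mono fun y hy => (hball hy).2) (fun y hy => (hball hy).1) hx (mem_ball_self hε)
  · rw [inf_principal_eq_bot]
    filter_upwards [hne] with x hx hxZ using hx hxZ.2

theorem differentiableAt_of_invOn (hU : IsOpen U) (hΦ : DifferentiableOn ℂ Φ U) (hV : IsOpen V)
    (hinv : InvOn Ψ Φ U V) (hmaps : MapsTo Ψ V U) {w : ℂ} (hw : w ∈ V)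
    (hd : deriv Φ (Ψ w) ≠ 0) : DifferentiableAt ℂ Ψ w :=
  (HasDerivAt.of_local_left_inverse ((continuousOn_of_invOn hU hΦ hinv hmaps).continuousAt
    (hV.mem_nhds hw)) (hΦ.differentiableAt (hU.mem_nhds (hmaps hw))).hasDerivAt hd
    (eventually_of_mem (hV.mem_nhds hw) hinv.2)).differentiableAt

end InverseOfInjective

theorem tendsto_cobounded_of_tendsto_div {Φ : ℂ → ℂ} {c : ℂ} (hc : c ≠ 0)
    (h : Tendsto (fun z => Φ z / z) (cobounded ℂ) (𝓝 c)) :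
    Tendsto Φ (cobounded ℂ) (cobounded ℂ) := by
  rw [← tendsto_norm_atTop_iff_cobounded]
  refine (h.norm.pos_mul_atTop (norm_pos_iff.2 hc) tendsto_norm_cobounded_atTop).congr' ?_
  filter_upwards [eventually_cobounded_le_norm 1] with z hz
  have hz0 : ‖z‖ ≠ 0 := by linarith
  simp [div_mul_cancel₀ _ hz0]

theorem isPreconnected_setOf_lt_norm {C : ℝ} (hC : 0 < C) :
    IsPreconnected {w : ℂ | C < ‖w‖} := by
  have hexp : {w : ℂ | C < ‖w‖} = Complex.exp '' {z | Real.log C < z.re} := by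
    ext w
    constructor
    · intro hw
      have hw0 : w ≠ 0 := norm_pos_iff.1 (hC.trans hw)
      exact ⟨Complex.log w, by simpa [log_re] using Real.log_lt_log hC hw, Complex.exp_log hw0⟩
    · rintro ⟨z, hz, rfl⟩
      simpa [norm_exp] using (Real.log_lt_iff_lt_exp hC).1 hz
  rw [hexp]
  exact (convex_halfSpace_re_gt _).isPreconnected.image _ Complex.continuous_exp.continuousOn

theorem tendsto_cobounded_of_invOn {K : Set ℂ} {Φ Ψ : ℂ → ℂ} (hK : IsCompact K)
    (hΦc : ContinuousOn Φ Kᶜ) (hΦ : Tendsto Φ (cobounded ℂ) (cobounded ℂ))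
    (hinv : InvOn Ψ Φ Kᶜ {w | 1 < ‖w‖}) (hΨ : ContinuousOn Ψ {w | 1 < ‖w‖}) :
    Tendsto Ψ (cobounded ℂ) (cobounded ℂ) := by
  rw [← tendsto_norm_atTop_iff_cobounded, Filter.tendsto_atTop]
  intro M
  obtain ⟨N, hNM, hNK⟩ : ∃ N, M ≤ N ∧ ∀ z : ℂ, N ≤ ‖z‖ → z ∈ Kᶜ := by
    obtain ⟨M₀, hM₀⟩ := hK.isBounded.subset_closedBall 0
    refine ⟨max M (M₀ + 1), le_max_left _ _, fun z hz hzK => ?_⟩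
    linarith [mem_closedBall_zero_iff.1 (hM₀ hzK), le_max_right M (M₀ + 1)]
  obtain ⟨C, hC1, hC⟩ : ∃ C, 1 ≤ C ∧ ∀ z : ℂ, ‖z‖ = N → ‖Φ z‖ ≤ C := by
    obtain ⟨C₀, hC₀⟩ := ((isCompact_sphere 0 N).image_of_continuousOn
      (hΦc.mono fun z hz => hNK z (by simp_all))).isBounded.subset_closedBall 0
    exact ⟨max C₀ 1, le_max_right _ _, fun z hz =>
      (mem_closedBall_zero_iff.1 (hC₀ ⟨z, by simpa using hz, rfl⟩)).trans (le_max_left _ _)⟩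
  have hW : {w : ℂ | C < ‖w‖} ⊆ {w | 1 < ‖w‖} := fun w hw => hC1.trans_lt hw
  -- `Φ` maps the circle `‖z‖ = N` into `‖w‖ ≤ C`, so on the connected set `‖w‖ > C` the
  -- continuous function `‖Ψ w‖` never crosses `N`, and it is `> N` somewhere.
  have hne : ∀ w ∈ {w : ℂ | C < ‖w‖}, ‖Ψ w‖ ≠ N := fun w hw h => by
    have := hC (Ψ w) h
    rw [hinv.2 (hW hw)] at this
    exact absurd hw (not_lt.2 this)
  obtain ⟨z₀, hz₀N, hz₀C⟩ := ((eventually_cobounded_le_norm (N + 1)).and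
    (hΦ.eventually (eventually_cobounded_le_norm (C + 1)))).exists
  have hfar : N ≤ ‖Ψ (Φ z₀)‖ := by
    rw [hinv.1 (hNK z₀ (by linarith))]
    linarith
  filter_upwards [eventually_cobounded_le_norm (C + 1)] with w hw
  by_contra! hlt
  obtain ⟨v, hv, hvN⟩ := (isPreconnected_setOf_lt_norm (by linarith)).intermediate_value
    (show C < ‖w‖ by linarith) (show C < ‖Φ z₀‖ by linarith)
    (continuous_norm.comp_continuousOn (hΨ.mono hW)) ⟨(hlt.trans_le hNM).le, hfar⟩
  exact hne v hv hvN

section Faber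

variable {K : Set ℂ} {Φ Ψ : ℂ → ℂ} {F : ℕ → Polynomial ℂ}

theorem HasFaberExpansion.tendstoUniformlyOn_sphere {R' ρ : ℝ} {f : ℂ → ℂ} {a : ℕ → ℂ}
    (ha : HasFaberExpansion F (greenLevel K Φ R') f a) (hΨ : ContinuousOn Ψ {w | 1 < ‖w‖})
    (hinv : RightInvOn Ψ Φ {w | 1 < ‖w‖}) (hmaps : MapsTo Ψ {w | 1 < ‖w‖} Kᶜ)
    (hρ : 1 < ρ) (hρR' : ρ < R') :
    TendstoUniformlyOn (fun N u => ∑ m ∈ Finset.range N, a m * (F m).eval (Ψ u)) (f ∘ Ψ) atTop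
      (sphere 0 ρ) := by
  have hsub : sphere (0 : ℂ) ρ ⊆ {w | 1 < ‖w‖} := fun u hu => by simp_all
  have hL : Ψ '' sphere 0 ρ ⊆ greenLevel K Φ R' := image_subset_iff.2 fun u hu =>
    Or.inr ⟨hmaps (hsub hu), by simp_all [hinv (hsub hu)]⟩
  exact ((ha _ hL ((isCompact_sphere 0 ρ).image_of_continuousOn (hΨ.mono hsub))).comp Ψ).mono
    (subset_preimage_image _ _)

theorem circleIntegral_faber_mul_inv_pow (hF : IsFaberFamily Φ F) {S : Set ℂ} (hS : S.Countable)
    (hΨ : ContinuousOn Ψ {w | 1 < ‖w‖})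
    (hΨd : ∀ w, 1 < ‖w‖ → w ∉ S → DifferentiableAt ℂ Ψ w)
    (hΨcob : Tendsto Ψ (cobounded ℂ) (cobounded ℂ)) (hinv : RightInvOn Ψ Φ {w | 1 < ‖w‖})
    {ρ : ℝ} (hρ : 1 < ρ) (m n : ℕ) :
    (∮ u in C(0, ρ), (F m).eval (Ψ u) * (u ^ (n + 1))⁻¹) = if m = n then 2 * π * I else 0 := by
  refine circleIntegral_mul_inv_pow_of_tendsto_pow_sub (by linarith) hS
    ((F m).continuous.comp_continuousOn (hΨ.mono fun u hu => hρ.trans_le hu))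
    (fun u hu huS => (F m).differentiable.differentiableAt.comp u (hΨd u (hρ.trans hu) huS))
    m ((hF m).2.comp hΨcob |>.congr' ?_) n
  filter_upwards [eventually_cobounded_le_norm 2] with u hu
  simp only [Function.comp_apply, hinv (show 1 < ‖u‖ by linarith)]

end Faber

theorem circleIntegral_conj_faber_general
    (K : Set ℂ) (Φ : ℂ → ℂ) (γ : ℝ) (F : ℕ → Polynomial ℂ)
    (hK : IsContinuum K) (hΦ : IsExtRiemannMap K Φ γ) (hF : IsFaberFamily Φ F)
    (Ψ : ℂ → ℂ) (hΨl : ∀ z ∈ Kᶜ, Ψ (Φ z) = z)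
    (hΨr : ∀ w : ℂ, 1 < ‖w‖ → Φ (Ψ w) = w)
    (R' R : ℝ) (hR : 1 < R) (hRR' : R < R')
    (f : ℂ → ℂ) (a : ℕ → ℂ)
    (ha : HasFaberExpansion F (greenLevel K Φ R') f a) :
    ∀ r : ℝ, 1 < r → r < R → ∀ n : ℕ, 1 ≤ n →
      (∮ w in C(0, R), (starRingEnd ℂ) (f (Ψ w)) * w ^ (n - 1)) -
        (∮ w in C(0, r), (starRingEnd ℂ) (f (Ψ w)) * w ^ (n - 1)) =
      2 * (Real.pi : ℂ) * Complex.I * (starRingEnd ℂ) (a n) *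
        (((R : ℂ)) ^ (2 * n) - ((r : ℂ)) ^ (2 * n)) := by
  intro r hr hrR n hn
  obtain ⟨hγ, hΦd, hbij, hΦγ⟩ := hΦ
  have hU : IsOpen Kᶜ := hK.1.isClosed.isOpen_compl
  have hinv : InvOn Ψ Φ Kᶜ {w | 1 < ‖w‖} := ⟨hΨl, hΨr⟩
  have hmaps : MapsTo Ψ {w | 1 < ‖w‖} Kᶜ := hinv.1.mapsTo hbij.surjOn
  have hΨ : ContinuousOn Ψ {w | 1 < ‖w‖} := continuousOn_of_invOn hU hΦd hinv hmaps
  have hΨcob : Tendsto Ψ (cobounded ℂ) (cobounded ℂ) := tendsto_cobounded_of_invOn hK.1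
    hΦd.continuousOn (tendsto_cobounded_of_tendsto_div (by exact_mod_cast hγ.ne') hΦγ) hinv hΨ
  have hΨd : ∀ w, 1 < ‖w‖ → w ∉ Φ '' {z ∈ Kᶜ | deriv Φ z = 0} → DifferentiableAt ℂ Ψ w :=
    fun w hw hwS => differentiableAt_of_invOn hU hΦd (isOpen_lt continuous_const continuous_norm)
      hinv hmaps hw fun h => hwS ⟨Ψ w, ⟨hmaps hw, h⟩, hΨr w hw⟩
  have hS := (countable_setOf_deriv_eq_zero_of_injOn hU hΦd hbij.injOn).image Φ
  have hcoeff : ∀ ρ, 1 < ρ → ρ < R' →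
      (∮ u in C(0, ρ), f (Ψ u) * (u ^ (n + 1))⁻¹) = 2 * π * I * a n := fun ρ hρ hρR' =>
    circleIntegral_mul_inv_pow_of_tendstoUniformlyOn (by linarith)
      (fun m => (F m).continuous.comp_continuousOn (hΨ.mono fun u hu => by simp_all))
      (circleIntegral_faber_mul_inv_pow hF hS hΨ hΨd hΨcob hΨr hρ · n)
      (ha.tendstoUniformlyOn_sphere hΨ hΨr hmaps hρ hρR')
  obtain ⟨k, rfl⟩ := Nat.exists_eq_add_of_le' hn
  rw [Nat.add_sub_cancel, circleIntegral_conj_mul_pow, circleIntegral_conj_mul_pow,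
    hcoeff R hR hRR', hcoeff r hr (hrR.trans hRR')]
  simp only [map_mul, conj_I, conj_ofReal, map_ofNat]
  ring

/-- The key circle-integral identity for the conjugated Faber expansion: for `1 < r < R < R′`
and `f` holomorphic on `Ω_{R′}` with Faber coefficients `(aₙ)`,
`∮_{|w|=R} conj(f(Φ⁻¹(w))) wⁿ⁻¹ dw − ∮_{|w|=r} conj(f(Φ⁻¹(w))) wⁿ⁻¹ dw
  = 2πi conj(aₙ)(R²ⁿ − r²ⁿ)`. -/
theorem circleIntegral_conj_faber
    (K : Set ℂ) (Φ : ℂ → ℂ) (γ : ℝ) (F : ℕ → Polynomial ℂ)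
    (hK : IsContinuum K) (hΦ : IsExtRiemannMap K Φ γ) (hF : IsFaberFamily Φ F)
    (Ψ : ℂ → ℂ) (hΨl : ∀ z ∈ Kᶜ, Ψ (Φ z) = z)
    (hΨr : ∀ w : ℂ, 1 < ‖w‖ → Φ (Ψ w) = w)
    (R' R : ℝ) (hR : 1 < R) (hRR' : R < R')
    (f : ℂ → ℂ) (a : ℕ → ℂ)
    (hf : DifferentiableOn ℂ f (greenLevel K Φ R'))
    (ha : HasFaberExpansion F (greenLevel K Φ R') f a) :
    ∀ r : ℝ, 1 < r → r < R → ∀ n : ℕ, 1 ≤ n →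
      (∮ w in C(0, R), (starRingEnd ℂ) (f (Ψ w)) * w ^ (n - 1)) -
        (∮ w in C(0, r), (starRingEnd ℂ) (f (Ψ w)) * w ^ (n - 1)) =
      2 * (Real.pi : ℂ) * Complex.I * (starRingEnd ℂ) (a n) *
        (((R : ℂ)) ^ (2 * n) - ((r : ℂ)) ^ (2 * n)) :=
  circleIntegral_conj_faber_general K Φ γ F hK hΦ hF Ψ hΨl hΨr R' R hR hRR' f a ha

end
end

section
/- (Bohr's theorem) Let f be holomorphic on the open unit disk 𝔻 = {z ∈ ℂ : |z| < 1} with Taylor expansion f(z) = ∑_{n≥0} a_n zⁿ on 𝔻. If |f(z)| < 1 for all z ∈ 𝔻, then ∑_{n≥0} |a_n|·|z|ⁿ < 1 for every z with |z| < 1/3. -/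
/-!
Wiener's inequality `‖aₙ‖ ≤ 1 - ‖a₀‖²` (`n ≥ 1`) does the work. Averaging `f` over the rotations
`z ↦ ζʲ z` by the `n`-th roots of unity keeps only the terms `a_{nk} z^{nk}`, so
`w ↦ ∑ a_{nk} wᵏ` is again a self-map of the disc, with value `a₀` and derivative `aₙ` at `0`;
the Schwarz–Pick inequality `‖g'(0)‖ ≤ 1 - ‖g(0)‖²` (the Schwarz lemma composed with the
Blaschke factor moving `g(0)` to `0`) bounds `aₙ`. Then for `r = ‖z‖ < 1/3`,
`∑ ‖aₙ‖ rⁿ ≤ ‖a₀‖ + (1 - ‖a₀‖²) r / (1 - r) ≤ ‖a₀‖ + (1 - ‖a₀‖²) / 2 < 1`.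
-/

open Complex Metric

open ComplexConjugate Finset Set

open scoped NNReal

namespace Complex

noncomputable def blaschkeFactor (t w : ℂ) : ℂ := (w - t) / (1 - conj t * w)

variable {t u : ℂ}

theorem norm_sub_lt_norm_one_sub_conj_mul (ht : ‖t‖ < 1) (hu : ‖u‖ < 1) :
    ‖u - t‖ < ‖1 - conj t * u‖ := by
  have hgap : normSq (1 - conj t * u) - normSq (u - t) = (1 - normSq t) * (1 - normSq u) := by
    simp only [normSq_apply, sub_re, sub_im, mul_re, mul_im, one_re, one_im, conj_re, conj_im]
    ring
  have hpos : 0 < (1 - normSq t) * (1 - normSq u) := by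
    rw [normSq_eq_norm_sq, normSq_eq_norm_sq]
    exact mul_pos (by nlinarith [norm_nonneg t]) (by nlinarith [norm_nonneg u])
  rw [norm_def, norm_def]
  exact Real.sqrt_lt_sqrt (normSq_nonneg _) (by linarith)

theorem one_sub_conj_mul_ne_zero (ht : ‖t‖ < 1) (hu : ‖u‖ < 1) : 1 - conj t * u ≠ 0 :=
  norm_pos_iff.1 ((norm_nonneg _).trans_lt (norm_sub_lt_norm_one_sub_conj_mul ht hu))

theorem norm_blaschkeFactor_lt_one (ht : ‖t‖ < 1) (hu : ‖u‖ < 1) :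
    ‖blaschkeFactor t u‖ < 1 := by
  rw [blaschkeFactor, norm_div, div_lt_one (norm_pos_iff.2 (one_sub_conj_mul_ne_zero ht hu))]
  exact norm_sub_lt_norm_one_sub_conj_mul ht hu

theorem blaschkeFactor_self (t : ℂ) : blaschkeFactor t t = 0 := by
  simp [blaschkeFactor]

theorem differentiableAt_blaschkeFactor (ht : ‖t‖ < 1) (hu : ‖u‖ < 1) :
    DifferentiableAt ℂ (blaschkeFactor t) u :=
  ((differentiableAt_id.sub_const t).fun_div
    ((differentiableAt_id.const_mul _).const_sub 1) (one_sub_conj_mul_ne_zero ht hu))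

theorem hasDerivAt_blaschkeFactor (ht : ‖t‖ < 1) :
    HasDerivAt (blaschkeFactor t) (1 - ‖t‖ ^ 2 : ℂ)⁻¹ t := by
  have hd : 1 - conj t * t = (1 - ‖t‖ ^ 2 : ℂ) := by rw [conj_mul']
  have hne : (1 - ‖t‖ ^ 2 : ℂ) ≠ 0 := hd ▸ one_sub_conj_mul_ne_zero ht ht
  refine (((hasDerivAt_id' t).sub_const t).fun_div
    (((hasDerivAt_id' t).const_mul (conj t)).const_sub 1) (hd ▸ hne)).congr_deriv ?_
  rw [hd, sub_self, zero_mul, sub_zero, one_mul, sq]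
  field_simp

theorem norm_deriv_le_one_sub_sq_of_mapsTo_ball {g : ℂ → ℂ}
    (hd : DifferentiableOn ℂ g (ball 0 1)) (hmaps : MapsTo g (ball 0 1) (ball 0 1)) :
    ‖deriv g 0‖ ≤ 1 - ‖g 0‖ ^ 2 := by
  set t := g 0
  have ht : ‖t‖ < 1 := mem_ball_zero_iff.1 (hmaps (mem_ball_self one_pos))
  have hg : ∀ w ∈ ball (0 : ℂ) 1, ‖g w‖ < 1 := fun w hw => mem_ball_zero_iff.1 (hmaps hw)
  have hGd : DifferentiableOn ℂ (blaschkeFactor t ∘ g) (ball 0 1) := fun w hw =>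
    (differentiableAt_blaschkeFactor ht (hg w hw)).comp_differentiableWithinAt w (hd w hw)
  have hGmaps :
      MapsTo (blaschkeFactor t ∘ g) (ball 0 1) (closedBall ((blaschkeFactor t ∘ g) 0) 1) :=
    fun w hw => by
      rw [Function.comp_apply, blaschkeFactor_self, mem_closedBall_zero_iff]
      exact (norm_blaschkeFactor_lt_one ht (hg w hw)).le
  have hGderiv : HasDerivAt (blaschkeFactor t ∘ g) ((1 - ‖t‖ ^ 2 : ℂ)⁻¹ * deriv g 0) 0 :=
    (hasDerivAt_blaschkeFactor ht).comp 0
      (hd.differentiableAt (isOpen_ball.mem_nhds (mem_ball_self one_pos))).hasDerivAt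
  have hschwarz := norm_deriv_le_one_of_mapsTo_ball hGd hGmaps one_pos
  have hpos : 0 < 1 - ‖t‖ ^ 2 := by nlinarith [norm_nonneg t]
  rwa [hGderiv.deriv, norm_mul, norm_inv, ← ofReal_pow, ← ofReal_one, ← ofReal_sub, norm_real,
    Real.norm_of_nonneg hpos.le, inv_mul_le_iff₀ hpos, mul_one] at hschwarz

end Complex

theorem hasFPowerSeriesOnBall_ofScalars_of_hasSum {c : ℕ → ℂ} {g : ℂ → ℂ} {R : ℝ≥0}
    (hR : 0 < R) (hc : ∀ z ∈ ball (0 : ℂ) R, HasSum (fun k => c k * z ^ k) (g z)) :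
    HasFPowerSeriesOnBall g (FormalMultilinearSeries.ofScalars ℂ c) 0 R := by
  have hradius : (R : ENNReal) ≤ (FormalMultilinearSeries.ofScalars ℂ c).radius := by
    refine ENNReal.le_of_forall_nnreal_lt fun r hr => ?_
    have hz : (r : ℂ) ∈ ball (0 : ℂ) R := by simpa using hr
    refine FormalMultilinearSeries.le_radius_of_tendsto _ (l := 0) ?_
    simpa [FormalMultilinearSeries.ofScalars_norm] using
      (hc _ hz).summable.tendsto_atTop_zero.norm
  refine ⟨hradius, by exact_mod_cast hR, fun {y} hy => ?_⟩
  rw [zero_add]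
  rw [eball_coe] at hy
  simpa [FormalMultilinearSeries.ofScalars_apply_eq, mul_comm] using hc y hy

theorem norm_coeff_one_le_one_sub_sq {c : ℕ → ℂ} {g : ℂ → ℂ}
    (hc : ∀ z ∈ ball (0 : ℂ) 1, HasSum (fun k => c k * z ^ k) (g z))
    (hg : MapsTo g (ball 0 1) (ball 0 1)) :
    ‖c 1‖ ≤ 1 - ‖c 0‖ ^ 2 := by
  have hp := hasFPowerSeriesOnBall_ofScalars_of_hasSum one_pos (by simpa using hc)
  have h0 : g 0 = c 0 := by simpa using (hp.coeff_zero fun _ => 0).symm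
  have h1 : deriv g 0 = c 1 := by simpa using hp.hasFPowerSeriesAt.deriv
  have hd := hp.differentiableOn
  rw [eball_coe, NNReal.coe_one] at hd
  simpa [h0, h1] using norm_deriv_le_one_sub_sq_of_mapsTo_ball hd hg

theorem IsPrimitiveRoot.sum_pow_pow_eq_ite {R : Type*} [CommRing R] [IsDomain R] {ζ : R} {n : ℕ}
    (hζ : IsPrimitiveRoot ζ n) (m : ℕ) :
    ∑ j ∈ range n, (ζ ^ j) ^ m = if n ∣ m then (n : R) else 0 := by
  simp_rw [← pow_mul, mul_comm _ m, pow_mul]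
  split_ifs with h
  · simp [(hζ.pow_eq_one_iff_dvd m).2 h]
  · have hne : ζ ^ m - 1 ≠ 0 := sub_ne_zero.2 fun h' => h ((hζ.pow_eq_one_iff_dvd m).1 h')
    have hpow : (ζ ^ m) ^ n = 1 := by rw [← pow_mul, mul_comm, pow_mul, hζ.pow_eq_one, one_pow]
    have hgeom := mul_geom_sum (ζ ^ m) n
    rw [hpow, sub_self] at hgeom
    exact (mul_eq_zero.1 hgeom).resolve_left hne

theorem IsPrimitiveRoot.hasSum_coeff_mul_pow_mul {𝕜 : Type*} [Field 𝕜] [TopologicalSpace 𝕜]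
    [IsTopologicalRing 𝕜] [CharZero 𝕜] {ζ z : 𝕜} {n : ℕ} (hζ : IsPrimitiveRoot ζ n) (hn : 0 < n)
    {a s : ℕ → 𝕜} (hs : ∀ j, HasSum (fun m => a m * (ζ ^ j * z) ^ m) (s j)) :
    HasSum (fun k => a (n * k) * z ^ (n * k)) ((n : 𝕜)⁻¹ * ∑ j ∈ range n, s j) := by
  have hfilter : HasSum (fun m => if n ∣ m then a m * z ^ m else 0)
      ((n : 𝕜)⁻¹ * ∑ j ∈ range n, s j) := by
    refine ((hasSum_sum fun j _ => hs j).mul_left (n : 𝕜)⁻¹).congr_fun fun m => ?_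
    have hterm : ∑ j ∈ range n, a m * (ζ ^ j * z) ^ m =
        a m * z ^ m * ∑ j ∈ range n, (ζ ^ j) ^ m := by
      rw [mul_sum]
      exact sum_congr rfl fun j _ => by ring
    rw [hterm, hζ.sum_pow_pow_eq_ite m]
    split_ifs
    · have hn' : (n : 𝕜) ≠ 0 := by exact_mod_cast hn.ne'
      field_simp
    · simp
  have hinj : Function.Injective (n * ·) := fun _ _ => Nat.eq_of_mul_eq_mul_left hn
  have hvanish : ∀ m ∉ range (n * ·), (if n ∣ m then a m * z ^ m else 0) = 0 := by
    intro m hm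
    rw [if_neg]
    rintro ⟨k, rfl⟩
    exact hm ⟨k, rfl⟩
  simpa [Function.comp_def] using (hinj.hasSum_iff hvanish).2 hfilter

theorem norm_coeff_le_one_sub_sq {f : ℂ → ℂ} {a : ℕ → ℂ}
    (ha : ∀ z ∈ ball (0 : ℂ) 1, HasSum (fun m => a m * z ^ m) (f z))
    (hf : MapsTo f (ball 0 1) (ball 0 1)) {n : ℕ} (hn : 0 < n) :
    ‖a n‖ ≤ 1 - ‖a 0‖ ^ 2 := by
  set ζ := exp (2 * Real.pi * I / n)
  have hζ : IsPrimitiveRoot ζ n := isPrimitiveRoot_exp n hn.ne'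
  have hrot : ∀ z ∈ ball (0 : ℂ) 1, ∀ j : ℕ, ζ ^ j * z ∈ ball (0 : ℂ) 1 := fun z hz j => by
    simpa [norm_mul, norm_pow, hζ.norm'_eq_one hn.ne'] using hz
  set F := fun z => (n : ℂ)⁻¹ * ∑ j ∈ range n, f (ζ ^ j * z)
  have hF : MapsTo F (ball 0 1) (ball 0 1) := fun z hz => by
    have := (convex_ball (0 : ℂ) 1).sum_mem (t := range n) (w := fun _ => (n : ℝ)⁻¹)
      (fun _ _ => by positivity) (by simp [hn.ne']) fun j _ => hf (hrot z hz j)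
    simpa [F, mul_sum, real_smul] using this
  have hsection : ∀ w ∈ ball (0 : ℂ) 1,
      ∃ z ∈ ball (0 : ℂ) 1, HasSum (fun k => a (n * k) * w ^ k) (F z) := by
    intro w hw
    obtain ⟨z, rfl⟩ := IsAlgClosed.exists_pow_nat_eq w hn
    have hz : z ∈ ball (0 : ℂ) 1 := by
      rw [mem_ball_zero_iff, norm_pow] at hw
      exact mem_ball_zero_iff.2 ((pow_lt_one_iff_of_nonneg (norm_nonneg z) hn.ne').1 hw)
    refine ⟨z, hz, ?_⟩
    simpa [← pow_mul] using hζ.hasSum_coeff_mul_pow_mul hn fun j => ha _ (hrot z hz j)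
  choose! root hroot hsum using hsection
  simpa using norm_coeff_one_le_one_sub_sq (c := fun k => a (n * k)) (g := F ∘ root) hsum
    fun w hw => hF (hroot w hw)

theorem tsum_mul_pow_lt_one_of_le_one_sub_sq {b : ℕ → ℝ} {r : ℝ} (hb : ∀ n, 0 ≤ b n)
    (hb0 : b 0 < 1) (hbn : ∀ n, 0 < n → b n ≤ 1 - b 0 ^ 2) (hr : 0 ≤ r) (hr3 : r < 1 / 3) :
    Summable (fun n => b n * r ^ n) ∧ ∑' n, b n * r ^ n < 1 := by
  set B := 1 - b 0 ^ 2
  have hr1 : r < 1 := by linarith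
  have hgeom := (summable_geometric_of_lt_one hr hr1).mul_left (B * r)
  have htail : ∀ n, b (n + 1) * r ^ (n + 1) ≤ B * r * r ^ n := fun n =>
    calc b (n + 1) * r ^ (n + 1) ≤ B * r ^ (n + 1) :=
          mul_le_mul_of_nonneg_right (hbn _ n.succ_pos) (by positivity)
      _ = B * r * r ^ n := by ring
  have hsummable_tail : Summable fun n => b (n + 1) * r ^ (n + 1) :=
    .of_nonneg_of_le (fun n => by have := hb (n + 1); positivity) htail hgeom
  have hsummable := (summable_nat_add_iff (f := fun n => b n * r ^ n) 1).1 hsummable_tail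
  refine ⟨hsummable, ?_⟩
  have htail_le : ∑' n, b (n + 1) * r ^ (n + 1) ≤ B * r / (1 - r) := by
    calc ∑' n, b (n + 1) * r ^ (n + 1) ≤ ∑' n, B * r * r ^ n :=
          hsummable_tail.tsum_le_tsum htail hgeom
      _ = B * r / (1 - r) := by
          rw [tsum_mul_left, tsum_geometric_of_lt_one hr hr1, div_eq_mul_inv]
  have hB : 0 ≤ B := by have := hb 0; simp only [B]; nlinarith
  have hratio : B * r / (1 - r) ≤ B / 2 := by
    rw [div_le_div_iff₀ (by linarith) two_pos]
    nlinarith [mul_le_mul_of_nonneg_left hr3.le hB]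
  have hmax : b 0 + B / 2 < 1 := by
    have := sq_pos_of_pos (sub_pos.2 hb0)
    simp only [B]
    nlinarith
  rw [hsummable.tsum_eq_zero_add, pow_zero, mul_one]
  linarith

theorem bohr_theorem_general
    (f : ℂ → ℂ) (a : ℕ → ℂ)
    (ha : ∀ z ∈ ball (0 : ℂ) 1, HasSum (fun n : ℕ => a n * z ^ n) (f z))
    (hb : ∀ z ∈ ball (0 : ℂ) 1, ‖f z‖ < 1) :
    ∀ z : ℂ, ‖z‖ < 1 / 3 →
      Summable (fun n : ℕ => ‖a n‖ * ‖z‖ ^ n) ∧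
        ∑' n : ℕ, ‖a n‖ * ‖z‖ ^ n < 1 := by
  intro z hz
  have hmaps : MapsTo f (ball 0 1) (ball 0 1) := fun w hw => mem_ball_zero_iff.2 (hb w hw)
  have hf0 : f 0 = a 0 := by
    have := hasSum_single (f := fun n => a n * (0 : ℂ) ^ n) 0 fun n hn => by simp [hn]
    simpa using (ha 0 (mem_ball_self one_pos)).unique this
  exact tsum_mul_pow_lt_one_of_le_one_sub_sq (fun _ => norm_nonneg _)
    (hf0 ▸ hb 0 (mem_ball_self one_pos)) (fun _ hn => norm_coeff_le_one_sub_sq ha hmaps hn)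
    (norm_nonneg z) hz

/-- Bohr's theorem: if `f = ∑ aₙ zⁿ` is holomorphic on the unit disk with `|f| < 1`, then
`∑ |aₙ||z|ⁿ < 1` for every `|z| < 1/3`. -/
theorem bohr_theorem
    (f : ℂ → ℂ) (a : ℕ → ℂ)
    (hf : DifferentiableOn ℂ f (ball (0 : ℂ) 1))
    (ha : ∀ z ∈ ball (0 : ℂ) 1, HasSum (fun n : ℕ => a n * z ^ n) (f z))
    (hb : ∀ z ∈ ball (0 : ℂ) 1, ‖f z‖ < 1) :
    ∀ z : ℂ, ‖z‖ < 1 / 3 →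
      Summable (fun n : ℕ => ‖a n‖ * ‖z‖ ^ n) ∧
        ∑' n : ℕ, ‖a n‖ * ‖z‖ ^ n < 1 :=
  bohr_theorem_general f a ha hb
end
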